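/- Let F = ⟨f_1,…,f_r⟩ be a flip sequence transforming T_0 into T_r, and let π(F) be a permutation of the flips of F that is a topological sort of the DAG D_F. Then π(F) is a valid sequence of flips transforming T_0 into T_r. -/

import Mathlib

open Finset

/-- Two vertices of the convex `m`-gon are adjacent in the cyclic order. -/
def PolyAdj (m : ℕ) (a b : Fin m) : Prop :=
  (a.val + 1) % m = b.val ∨ (b.val + 1) % m = a.val

/-- `e` is a diagonal of the convex `m`-gon: an unordered pair of distinct,
non-adjacent vertices. -/
def IsDiagonal (m : ℕ) (e : Finset (Fin m)) : Prop :=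
  ∃ a b : Fin m, a ≠ b ∧ ¬ PolyAdj m a b ∧ e = {a, b}

/-- The cyclic distance from `a` to `x`, going forwards in the cyclic order. -/
def cycDist (m : ℕ) (a x : Fin m) : ℕ := (x.val + m - a.val) % m

/-- `x` lies strictly between `a` and `b` in the cyclic order. -/
def CycBtw (m : ℕ) (a x b : Fin m) : Prop :=
  0 < cycDist m a x ∧ cycDist m a x < cycDist m a b

/-- Two chords cross: their endpoints strictly interleave in the cyclic order. -/
def Cross (m : ℕ) (e₁ e₂ : Finset (Fin m)) : Prop :=
  ∃ a b c d : Fin m, e₁ = {a, b} ∧ e₂ = {c, d} ∧ CycBtw m a c b ∧ CycBtw m b d a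

/-- A triangulation of the convex `m`-gon: a maximal set of pairwise
non-crossing diagonals. -/
structure Triangulation (m : ℕ) where
  diagonals : Finset (Finset (Fin m))
  isDiagonal : ∀ e ∈ diagonals, IsDiagonal m e
  noncross : ∀ e₁ ∈ diagonals, ∀ e₂ ∈ diagonals, ¬ Cross m e₁ e₂
  maximal : ∀ e, IsDiagonal m e → (∀ e' ∈ diagonals, ¬ Cross m e e') → e ∈ diagonals

/-- `e` is a side in the triangulation `T`: either an edge of the polygon
(between cyclically adjacent vertices) or a diagonal of `T`. -/
def IsSide (m : ℕ) (T : Triangulation m) (e : Finset (Fin m)) : Prop :=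
  (∃ a b : Fin m, PolyAdj m a b ∧ e = {a, b}) ∨ e ∈ T.diagonals

/-- `t` is a triangle of the triangulation `T`: three distinct vertices each
pair of which forms a side of `T`. -/
def IsTriangle (m : ℕ) (T : Triangulation m) (t : Finset (Fin m)) : Prop :=
  ∃ a b c : Fin m, a ≠ b ∧ a ≠ c ∧ b ≠ c ∧ t = {a, b, c} ∧
    IsSide m T {a, b} ∧ IsSide m T {a, c} ∧ IsSide m T {b, c}

/-- Two diagonals of `T` are neighbors if they both belong to `T` and lie on a
common triangle of `T`; they are independent otherwise. -/
def Neighbor (m : ℕ) (T : Triangulation m) (e₁ e₂ : Finset (Fin m)) : Prop :=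
  e₁ ∈ T.diagonals ∧ e₂ ∈ T.diagonals ∧
    ∃ t, IsTriangle m T t ∧ e₁ ⊆ t ∧ e₂ ⊆ t

/-- `T'` is obtained from `T` by flipping the diagonal `e`, which removes `e`
and creates the new diagonal `e'` (necessarily the opposite diagonal of the
quadrilateral formed by the two triangles of `T` containing `e`, since `T'` is
again a triangulation). -/
def IsFlip (m : ℕ) (T T' : Triangulation m) (e e' : Finset (Fin m)) : Prop :=
  e ∈ T.diagonals ∧ e' ∉ T.diagonals ∧
    T'.diagonals = insert e' (T.diagonals.erase e)

/-- `Ts 0, Ts 1, …, Ts r` is a sequence of triangulations in which `Ts (i+1)`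
is obtained from `Ts i` by performing the flip `F i`, which removes the
diagonal `(F i).1` and creates the diagonal `(F i).2`. -/
def IsFlipSeq (m r : ℕ) (F : ℕ → Finset (Fin m) × Finset (Fin m))
    (Ts : ℕ → Triangulation m) : Prop :=
  ∀ i < r, IsFlip m (Ts i) (Ts (i + 1)) (F i).1 (F i).2

/-- The flip distance between two triangulations: the minimum length of a flip
sequence transforming one into the other. -/
noncomputable def FlipDist (m : ℕ) (T T' : Triangulation m) : ℕ :=
  sInf {r | ∃ F Ts, IsFlipSeq m r F Ts ∧ Ts 0 = T ∧ Ts r = T'}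

/-- `e` is a free-diagonal of `T` with respect to `Tfinal`: flipping `e` in `T`
creates a diagonal belonging to `Tfinal`. -/
def FreeDiagonal (m : ℕ) (T Tfinal : Triangulation m) (e : Finset (Fin m)) : Prop :=
  ∃ T' e', IsFlip m T T' e e' ∧ e' ∈ Tfinal.diagonals

/-- Arc of the DAG `D_F` associated to the flip sequence `F` with triangulation
sequence `Ts`: there is an arc from flip `i` to flip `j` when `i < j` and the
diagonal created by flip `i` is a neighbor of the diagonal removed by flip `j`
in the triangulation `Ts j` in which flip `j` is performed. -/
def Arc (m r : ℕ) (F : ℕ → Finset (Fin m) × Finset (Fin m))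
    (Ts : ℕ → Triangulation m) (i j : ℕ) : Prop :=
  i < j ∧ j < r ∧ Neighbor m (Ts j) (F i).2 (F j).1


/-! The first flip `f` of the topological sort has no incoming arc in `D_F`. Let `abc`, `abc'` be
the two triangles on `f^← = {a, b}` when `f` is performed. A flip performed earlier which created a
side of this quadrilateral would give an arc into `f`, so going backwards the quadrilateral is
present in every earlier triangulation, and `f` can be performed in each of them, creating
`{c, c'}`. Since flips of distinct diagonals commute, `f` can be moved to the front of `F`. The
remaining flips, in their original order, form a shorter flip sequence whose DAG has no new arcs:
after flipping `{a, b}` a diagonal only gains neighbors across the new triangles `cc'a`, `cc'b`,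
whose sides lie on the old quadrilateral, and this would again give an arc into `f`. Induction on
the length of `F` concludes. -/

lemma Finset.pair_eq_pair_iff {α : Type*} [DecidableEq α] {a b c d : α} :
    ({a, b} : Finset α) = {c, d} ↔ a = c ∧ b = d ∨ a = d ∧ b = c := by
  rw [← coe_inj, coe_pair, coe_pair, Set.pair_eq_pair_iff]

section Geometry

variable {m : ℕ}

lemma cycDist_spec (o x : Fin m) :
    o.val ≤ x.val ∧ cycDist m o x = x.val - o.val ∨
      x.val < o.val ∧ cycDist m o x = x.val + m - o.val := by
  have := x.isLt
  unfold cycDist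
  rcases le_or_gt o.val x.val with h | h
  · refine .inl ⟨h, ?_⟩
    rw [show x.val + m - o.val = x.val - o.val + m by omega, Nat.add_mod_right]
    exact Nat.mod_eq_of_lt (by omega)
  · exact .inr ⟨h, Nat.mod_eq_of_lt (by omega)⟩

lemma cycDist_lt (o x : Fin m) : cycDist m o x < m := by
  have := cycDist_spec o x; omega

@[simp]
lemma cycDist_self (o : Fin m) : cycDist m o o = 0 := by
  have := cycDist_spec o o; omega

lemma cycDist_inj {o x y : Fin m} : cycDist m o x = cycDist m o y ↔ x = y := by
  have := cycDist_spec o x; have := cycDist_spec o y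
  rw [Fin.ext_iff]; omega

lemma cycDist_eq_of_le (o : Fin m) {x y : Fin m} (h : cycDist m o x ≤ cycDist m o y) :
    cycDist m x y = cycDist m o y - cycDist m o x := by
  have := cycDist_spec o x; have := cycDist_spec o y; have := cycDist_spec x y; omega

lemma cycDist_eq_of_lt (o : Fin m) {x y : Fin m} (h : cycDist m o y < cycDist m o x) :
    cycDist m x y = cycDist m o y + m - cycDist m o x := by
  have := cycDist_spec o x; have := cycDist_spec o y; have := cycDist_spec x y; omega

lemma exists_cycDist_eq (o : Fin m) {k : ℕ} (hk : k < m) : ∃ x, cycDist m o x = k := by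
  have := o.isLt
  rcases lt_or_ge (o.val + k) m with h | h
  · exact ⟨⟨o.val + k, h⟩, by have := cycDist_spec o ⟨o.val + k, h⟩; simp at this; omega⟩
  · exact ⟨⟨o.val + k - m, by omega⟩, by
      have := cycDist_spec o ⟨o.val + k - m, by omega⟩; simp at this; omega⟩

lemma cycBtw_iff_cycDist (o : Fin m) {u v w : Fin m} :
    CycBtw m u v w ↔
      cycDist m o u < cycDist m o v ∧ cycDist m o v < cycDist m o w ∨
      cycDist m o v < cycDist m o w ∧ cycDist m o w < cycDist m o u ∨
      cycDist m o w < cycDist m o u ∧ cycDist m o u < cycDist m o v := by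
  have := cycDist_spec o u; have := cycDist_spec o v; have := cycDist_spec o w
  have := cycDist_spec u v; have := cycDist_spec u w
  unfold CycBtw; omega

lemma ne_of_cycBtw {u v w : Fin m} (h : CycBtw m u v w) : u ≠ v ∧ v ≠ w ∧ u ≠ w := by
  rw [cycBtw_iff_cycDist u] at h
  refine ⟨?_, ?_, ?_⟩ <;> rintro rfl <;> omega

lemma cycBtw_or_cycBtw {u v w : Fin m} (huv : u ≠ v) (hvw : v ≠ w) (huw : u ≠ w) :
    CycBtw m u v w ∨ CycBtw m w v u := by
  simp only [cycBtw_iff_cycDist u, cycDist_self]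
  rw [Ne, ← cycDist_inj (o := u), cycDist_self] at huv huw
  rw [Ne, ← cycDist_inj (o := u)] at hvw
  omega

lemma polyAdj_comm {u v : Fin m} : PolyAdj m u v ↔ PolyAdj m v u := Or.comm

lemma polyAdj_iff {u v : Fin m} (huv : u ≠ v) :
    PolyAdj m u v ↔ cycDist m u v = 1 ∨ cycDist m v u = 1 := by
  have key : ∀ x y : Fin m, (x.val + 1) % m = y.val ↔ cycDist m x y = 1 := by
    intro x y
    have := x.isLt; have := cycDist_spec x y
    rcases lt_or_ge (x.val + 1) m with h | h
    · rw [Nat.mod_eq_of_lt h]; omega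
    · rw [show x.val + 1 = m by omega, Nat.mod_self]; omega
  unfold PolyAdj
  rw [key, key]

lemma isDiagonal_pair_iff {a b : Fin m} : IsDiagonal m {a, b} ↔ a ≠ b ∧ ¬ PolyAdj m a b := by
  constructor
  · rintro ⟨u, v, huv, hadj, h⟩
    rw [Finset.pair_eq_pair_iff] at h
    rcases h with ⟨rfl, rfl⟩ | ⟨rfl, rfl⟩
    · exact ⟨huv, hadj⟩
    · exact ⟨huv.symm, polyAdj_comm.not.mp hadj⟩
  · rintro ⟨hab, hadj⟩
    exact ⟨a, b, hab, hadj, rfl⟩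

lemma cross_pair_iff {u v p q : Fin m} :
    Cross m {u, v} {p, q} ↔
      CycBtw m u p v ∧ CycBtw m v q u ∨ CycBtw m u q v ∧ CycBtw m v p u := by
  constructor
  · rintro ⟨a, b, c, d, hab, hcd, h₁, h₂⟩
    rw [Finset.pair_eq_pair_iff] at hab hcd
    rcases hab with ⟨rfl, rfl⟩ | ⟨rfl, rfl⟩ <;> rcases hcd with ⟨rfl, rfl⟩ | ⟨rfl, rfl⟩ <;>
      tauto
  · rintro (⟨h₁, h₂⟩ | ⟨h₁, h₂⟩)
    · exact ⟨u, v, p, q, rfl, rfl, h₁, h₂⟩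
    · exact ⟨u, v, q, p, rfl, pair_comm p q, h₁, h₂⟩

lemma Cross.exists_pair {e f : Finset (Fin m)} (h : Cross m e f) :
    ∃ u v p q, e = {u, v} ∧ f = {p, q} ∧ Cross m {u, v} {p, q} := by
  obtain ⟨u, v, p, q, rfl, rfl, huv⟩ := h
  exact ⟨u, v, p, q, rfl, rfl, u, v, p, q, rfl, rfl, huv⟩

lemma Cross.symm {e f : Finset (Fin m)} (h : Cross m e f) : Cross m f e := by
  obtain ⟨u, v, p, q, rfl, rfl, h⟩ := h.exists_pair
  rw [cross_pair_iff] at h ⊢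
  simp only [cycBtw_iff_cycDist u] at h ⊢
  omega

lemma not_cross_self (e : Finset (Fin m)) : ¬ Cross m e e := by
  intro h
  obtain ⟨u, v, p, q, h₁, h₂, h⟩ := h.exists_pair
  rw [h₁, Finset.pair_eq_pair_iff] at h₂
  rw [cross_pair_iff] at h
  rcases h₂ with ⟨rfl, rfl⟩ | ⟨rfl, rfl⟩ <;>
    simp only [cycBtw_iff_cycDist u] at h <;> omega

lemma not_cross_of_polyAdj {u v : Fin m} (h : PolyAdj m u v) (e : Finset (Fin m)) :
    ¬ Cross m {u, v} e := by
  rintro ⟨a, b, c, d, hab, -, hc, hd⟩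
  have hadj : PolyAdj m a b := by
    rw [Finset.pair_eq_pair_iff] at hab
    rcases hab with ⟨rfl, rfl⟩ | ⟨rfl, rfl⟩
    · exact h
    · exact polyAdj_comm.mp h
  rw [cycBtw_iff_cycDist a, cycDist_self] at hc hd
  have := cycDist_lt a d
  have hb : 0 < cycDist m a b := by omega
  rw [polyAdj_iff (fun h => by simp [h] at hb),
    cycDist_eq_of_lt a (x := b) (y := a) (by simpa using hb), cycDist_self] at hadj
  omega

/-- Chords in the polygon unrolled at a vertex `o`, that is, in the coordinates `cycDist m o`:
the chord `{s, t}` with `s < t` crosses `{p, q}`. -/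
def Separates (s t p q : ℕ) : Prop :=
  s < p ∧ p < t ∧ (q < s ∨ t < q) ∨ s < q ∧ q < t ∧ (p < s ∨ t < p)

lemma cross_iff_separates (o : Fin m) {u v p q : Fin m} (h : cycDist m o u < cycDist m o v) :
    Cross m {u, v} {p, q} ↔
      Separates (cycDist m o u) (cycDist m o v) (cycDist m o p) (cycDist m o q) := by
  rw [cross_pair_iff]
  simp only [cycBtw_iff_cycDist o]
  unfold Separates
  omega

section Quadrilateral

variable {a b c c' : Fin m}

lemma cycDist_quad (hc : CycBtw m a c b) (hc' : CycBtw m b c' a) :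
    0 < cycDist m a c ∧ cycDist m a c < cycDist m a b ∧ cycDist m a b < cycDist m a c' := by
  rw [cycBtw_iff_cycDist a, cycDist_self] at hc hc'
  omega

lemma cross_quad (hc : CycBtw m a c b) (hc' : CycBtw m b c' a) : Cross m {a, b} {c, c'} :=
  cross_pair_iff.mpr (.inl ⟨hc, hc'⟩)

lemma cycBtw_quad_flip (hc : CycBtw m a c b) (hc' : CycBtw m b c' a) :
    CycBtw m c b c' ∧ CycBtw m c' a c := by
  have := cycDist_quad hc hc'
  simp only [cycBtw_iff_cycDist a, cycDist_self]
  omega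

lemma isDiagonal_quad (hc : CycBtw m a c b) (hc' : CycBtw m b c' a) : IsDiagonal m {c, c'} := by
  obtain ⟨h₁, h₂, h₃⟩ := cycDist_quad hc hc'
  have := cycDist_lt a c'
  have hcc' : c ≠ c' := fun h => by simp [h] at h₂; omega
  refine ⟨c, c', hcc', ?_, rfl⟩
  rw [polyAdj_iff hcc', cycDist_eq_of_le a (x := c) (y := c') (by omega),
    cycDist_eq_of_lt a (x := c') (y := c) (by omega)]
  omega

lemma not_cross_of_not_cross_quad (hc : CycBtw m a c b) (hc' : CycBtw m b c' a) {p q : Fin m}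
    (hac : ¬ Cross m {a, c} {p, q}) (hcb : ¬ Cross m {c, b} {p, q})
    (hbc' : ¬ Cross m {b, c'} {p, q}) (hc'a : ¬ Cross m {c', a} {p, q})
    (hab : ¬ Cross m {a, b} {p, q}) (hne : ({p, q} : Finset (Fin m)) ≠ {a, b}) :
    ¬ Cross m {c, c'} {p, q} := by
  obtain ⟨h₁, h₂, h₃⟩ := cycDist_quad hc hc'
  rw [pair_comm c' a] at hc'a
  rw [cross_iff_separates a (by simpa using h₁)] at hac
  rw [cross_iff_separates a h₂] at hcb
  rw [cross_iff_separates a h₃] at hbc'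
  rw [cross_iff_separates a (by simp; omega)] at hc'a hab
  rw [cross_iff_separates a (by omega)]
  rw [Ne, Finset.pair_eq_pair_iff] at hne
  simp only [← cycDist_inj (o := a), cycDist_self] at hne hac hc'a hab
  unfold Separates at *
  omega

lemma eq_of_cross_of_not_cross_quad (hc : CycBtw m a c b) (hc' : CycBtw m b c' a) {p q : Fin m}
    (hac : ¬ Cross m {a, c} {p, q}) (hcb : ¬ Cross m {c, b} {p, q})
    (hbc' : ¬ Cross m {b, c'} {p, q}) (hc'a : ¬ Cross m {c', a} {p, q})
    (hab : Cross m {a, b} {p, q}) : ({p, q} : Finset (Fin m)) = {c, c'} := by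
  obtain ⟨h₁, h₂, h₃⟩ := cycDist_quad hc hc'
  rw [pair_comm c' a] at hc'a
  rw [cross_iff_separates a (by simpa using h₁)] at hac
  rw [cross_iff_separates a h₂] at hcb
  rw [cross_iff_separates a h₃] at hbc'
  rw [cross_iff_separates a (by simp; omega)] at hc'a hab
  rw [Finset.pair_eq_pair_iff]
  simp only [← cycDist_inj (o := a), cycDist_self] at hac hc'a hab ⊢
  unfold Separates at *
  omega

end Quadrilateral

section Triangulation

variable {T T' T₁ T₁' U : Triangulation m} {a b c c' : Fin m}

lemma IsSide.not_cross {s e : Finset (Fin m)} (hs : IsSide m T s) (he : IsSide m T e) :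
    ¬ Cross m s e := by
  rcases hs with ⟨u, v, huv, rfl⟩ | hs
  · exact not_cross_of_polyAdj huv e
  rcases he with ⟨u, v, huv, rfl⟩ | he
  · exact fun h => not_cross_of_polyAdj huv s h.symm
  exact T.noncross s hs e he

lemma IsSide.mem_diagonals {e : Finset (Fin m)} (hs : IsSide m T e) (he : IsDiagonal m e) :
    e ∈ T.diagonals := by
  rcases hs with ⟨u, v, huv, rfl⟩ | hs
  · exact absurd huv (isDiagonal_pair_iff.mp he).2
  · exact hs

lemma IsTriangle.card_eq {t : Finset (Fin m)} (ht : IsTriangle m T t) : t.card = 3 := by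
  obtain ⟨x, y, z, hxy, hxz, hyz, rfl, -⟩ := ht
  exact card_eq_three.mpr ⟨x, y, z, hxy, hxz, hyz, rfl⟩

lemma IsTriangle.isSide {t : Finset (Fin m)} (ht : IsTriangle m T t) {u v : Fin m}
    (hu : u ∈ t) (hv : v ∈ t) (huv : u ≠ v) : IsSide m T {u, v} := by
  obtain ⟨x, y, z, -, -, -, rfl, hxy, hxz, hyz⟩ := ht
  simp only [mem_insert, mem_singleton] at hu hv
  rcases hu with rfl | rfl | rfl <;> rcases hv with rfl | rfl | rfl <;>
    first
    | exact absurd rfl huv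
    | assumption
    | rwa [pair_comm]

lemma IsTriangle.mem_of_subset {t e : Finset (Fin m)} (ht : IsTriangle m T t)
    (he : IsDiagonal m e) (het : e ⊆ t) : e ∈ T.diagonals := by
  obtain ⟨p, q, hpq, hadj, rfl⟩ := he
  exact (ht.isSide (het (by simp)) (het (by simp)) hpq).mem_diagonals ⟨p, q, hpq, hadj, rfl⟩

lemma IsTriangle.exists_mem_ne {t : Finset (Fin m)} (ht : IsTriangle m T t) (a b : Fin m) :
    ∃ w ∈ t, w ≠ a ∧ w ≠ b := by
  by_contra! h
  have : t ⊆ {a, b} := fun w hw => by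
    by_cases hwa : w = a
    · simp [hwa]
    · simp [h w hw hwa]
  have := (card_le_card this).trans card_le_two
  rw [ht.card_eq] at this
  omega

/-- `c` is the apex of the triangle of `T` on `{a, b}` lying on the arc from `a` to `b`. -/
def IsApex (T : Triangulation m) (a b c : Fin m) : Prop :=
  CycBtw m a c b ∧ IsSide m T {a, c} ∧ IsSide m T {c, b}

lemma IsApex.eq {x y : Fin m} (hx : IsApex T a b x) (hy : IsApex T a b y) : x = y := by
  have key : ∀ {x y}, IsApex T a b x → IsApex T a b y → ¬ cycDist m a x < cycDist m a y := by
    rintro x y ⟨hx, -, hxb⟩ ⟨hy, hay, -⟩ hlt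
    rw [cycBtw_iff_cycDist a, cycDist_self] at hx hy
    refine hxb.not_cross hay ?_
    rw [cross_iff_separates a (by omega), cycDist_self]
    unfold Separates
    omega
  rw [← cycDist_inj (o := a)]
  have := key hx hy
  have := key hy hx
  omega

/-- A diagonal crossing `{a, c}` would have to cross `{c, b}` or `{a, b}`, or else end at `b` and
give a vertex nearer to `a` than `c`. -/
lemma isSide_of_nearest (hab : {a, b} ∈ T.diagonals) (hc : CycBtw m a c b)
    (hcb : IsSide m T {c, b})
    (hmin : ∀ x, CycBtw m a x b → IsSide m T {x, b} → cycDist m a c ≤ cycDist m a x) :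
    IsSide m T {a, c} := by
  by_cases hadj : PolyAdj m a c
  · exact .inl ⟨a, c, hadj, rfl⟩
  have hc' := hc
  rw [cycBtw_iff_cycDist a, cycDist_self] at hc'
  have key : ∀ z w, ({z, w} : Finset (Fin m)) ∈ T.diagonals → 0 < cycDist m a z →
      cycDist m a z < cycDist m a c → cycDist m a c < cycDist m a w → False := by
    intro z w hg hz₀ hz hw
    have := cycDist_lt a w
    rcases lt_trichotomy (cycDist m a w) (cycDist m a b) with hwb | hwb | hwb
    · refine hcb.not_cross (.inr hg) ?_
      rw [cross_iff_separates a (u := c) (v := b) (by omega)]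
      unfold Separates; omega
    · rw [cycDist_inj] at hwb
      subst hwb
      have := hmin z (by rw [cycBtw_iff_cycDist a, cycDist_self]; omega) (.inr hg)
      omega
    · refine T.noncross _ hab _ hg ?_
      rw [cross_iff_separates a (u := a) (v := b) (by simp; omega), cycDist_self]
      unfold Separates; omega
  refine .inr (T.maximal _ ⟨a, c, (ne_of_cycBtw hc).1, hadj, rfl⟩ fun g hg hcross => ?_)
  obtain ⟨z, w, -, -, rfl⟩ := T.isDiagonal g hg
  rw [cross_iff_separates a (u := a) (v := c) (by simp; omega), cycDist_self] at hcross
  unfold Separates at hcross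
  rcases hcross with ⟨h₁, h₂, h₃⟩ | ⟨h₁, h₂, h₃⟩
  · exact key z w hg h₁ h₂ (by omega)
  · exact key w z (pair_comm z w ▸ hg) h₁ h₂ (by omega)

lemma exists_isApex (hab : {a, b} ∈ T.diagonals) : ∃ c, IsApex T a b c := by
  classical
  obtain ⟨hne, hnadj⟩ := isDiagonal_pair_iff.mp (T.isDiagonal _ hab)
  have hb₀ : cycDist m a b ≠ 0 := fun h => hne (cycDist_inj.mp (by rw [h, cycDist_self]))
  have hb₁ : cycDist m a b ≠ 1 := fun h => hnadj ((polyAdj_iff hne).mpr (.inl h))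
  obtain ⟨x, hx⟩ := exists_cycDist_eq a (k := cycDist m a b - 1)
    (by have := cycDist_lt a b; omega)
  set S := univ.filter fun x => CycBtw m a x b ∧ IsSide m T {x, b}
  have hxS : x ∈ S := by
    have hxb : x ≠ b := fun h => by rw [h] at hx; omega
    refine mem_filter.mpr ⟨mem_univ _, ?_, .inl ⟨x, b, ?_, rfl⟩⟩
    · rw [cycBtw_iff_cycDist a, cycDist_self]; omega
    · rw [polyAdj_iff hxb, cycDist_eq_of_le a (x := x) (y := b) (by omega)]; omega
  obtain ⟨c, hcS, hmin⟩ := S.exists_min_image (cycDist m a) ⟨x, hxS⟩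
  obtain ⟨hc, hcb⟩ := (mem_filter.mp hcS).2
  exact ⟨c, hc, isSide_of_nearest hab hc hcb fun y hy hyb =>
    hmin y (mem_filter.mpr ⟨mem_univ _, hy, hyb⟩), hcb⟩

/-- `{a, b}` is a diagonal of `T` whose two triangles are `abc` and `abc'`, where `c` lies on the
arc from `a` to `b` and `c'` on the arc from `b` to `a`. -/
structure IsQuad (T : Triangulation m) (a b c c' : Fin m) : Prop where
  mem : {a, b} ∈ T.diagonals
  left : IsApex T a b c
  right : IsApex T b a c'

lemma exists_isQuad {e : Finset (Fin m)} (he : e ∈ T.diagonals) :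
    ∃ a b c c', e = {a, b} ∧ IsQuad T a b c c' := by
  obtain ⟨a, b, -, -, rfl⟩ := T.isDiagonal e he
  obtain ⟨c, hc⟩ := exists_isApex he
  obtain ⟨c', hc'⟩ := exists_isApex (pair_comm a b ▸ he)
  exact ⟨a, b, c, c', rfl, he, hc, hc'⟩

section Flip

variable {e f : Finset (Fin m)}

lemma IsFlip.mem_right (h : IsFlip m T T' e f) : f ∈ T'.diagonals := by
  rw [h.2.2]; exact mem_insert_self _ _

lemma IsFlip.not_mem_right (h : IsFlip m T T' e f) : e ∉ T'.diagonals := by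
  rw [h.2.2, mem_insert, mem_erase]
  rintro (rfl | ⟨hne, -⟩)
  · exact h.2.1 h.1
  · exact hne rfl

lemma IsFlip.mem_of_mem (h : IsFlip m T T' e f) {s : Finset (Fin m)} (hs : s ∈ T.diagonals)
    (hne : s ≠ e) : s ∈ T'.diagonals := by
  rw [h.2.2]; exact mem_insert_of_mem (mem_erase.mpr ⟨hne, hs⟩)

lemma IsFlip.mem_of_mem_right (h : IsFlip m T T' e f) {s : Finset (Fin m)}
    (hs : s ∈ T'.diagonals) (hne : s ≠ f) : s ∈ T.diagonals := by
  rw [h.2.2, mem_insert] at hs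
  exact mem_of_mem_erase (hs.resolve_left hne)

lemma IsFlip.isSide (h : IsFlip m T T' e f) {s : Finset (Fin m)} (hs : IsSide m T s)
    (hne : s ≠ e) : IsSide m T' s :=
  hs.imp id (h.mem_of_mem · hne)

lemma IsFlip.isSide_of_right (h : IsFlip m T T' e f) {s : Finset (Fin m)} (hs : IsSide m T' s)
    (hne : s ≠ f) : IsSide m T s :=
  hs.imp id (h.mem_of_mem_right · hne)

lemma IsFlip.isTriangle_of_right (h : IsFlip m T T' e f) {t : Finset (Fin m)}
    (ht : IsTriangle m T' t) (hft : ¬ f ⊆ t) : IsTriangle m T t := by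
  obtain ⟨x, y, z, hxy, hxz, hyz, rfl, h₁, h₂, h₃⟩ := ht
  have hne : ∀ {s}, s ⊆ ({x, y, z} : Finset (Fin m)) → s ≠ f := fun hs h => hft (h ▸ hs)
  exact ⟨x, y, z, hxy, hxz, hyz, rfl, h.isSide_of_right h₁ (hne (by simp)),
    h.isSide_of_right h₂ (hne (by simp)), h.isSide_of_right h₃ (hne (by simp))⟩

/-- The created diagonal crosses some diagonal of `T` by maximality, and every diagonal of `T`
other than the removed one survives in `T'`. -/
lemma IsFlip.cross (h : IsFlip m T T' e f) : Cross m f e := by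
  by_contra hfe
  refine h.2.1 (T.maximal f (T'.isDiagonal f h.mem_right) fun g hg hfg => ?_)
  obtain rfl | hne := eq_or_ne g e
  · exact hfe hfg
  · exact T'.noncross f h.mem_right g (h.mem_of_mem hg hne) hfg

lemma IsFlip.commute {d d' : Finset (Fin m)} (h : IsFlip m T T₁ e f)
    (hd : IsFlip m T T' d d') (hd₁ : IsFlip m T₁ T₁' d d') : IsFlip m T' T₁' e f := by
  have hed : e ≠ d := fun h' => h.not_mem_right (h' ▸ hd₁.1)
  have hed' : e ≠ d' := fun h' => hd.2.1 (h' ▸ h.1)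
  have hfd : f ≠ d := fun h' => h.2.1 (h' ▸ hd.1)
  have hfd' : f ≠ d' := fun h' => hd₁.2.1 (h' ▸ h.mem_right)
  refine ⟨hd.mem_of_mem h.1 hed, fun hf => h.2.1 (hd.mem_of_mem_right hf hfd'), ?_⟩
  rw [hd.2.2, hd₁.2.2, h.2.2]
  ext s
  simp only [mem_insert, mem_erase]
  grind

end Flip

namespace IsQuad

lemma ne (hq : IsQuad T a b c c') : a ≠ b ∧ a ≠ c ∧ c ≠ b ∧ b ≠ c' ∧ c' ≠ a := by
  obtain ⟨hac, hcb, hab⟩ := ne_of_cycBtw hq.left.1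
  obtain ⟨hbc', hc'a, -⟩ := ne_of_cycBtw hq.right.1
  exact ⟨hab, hac, hcb, hbc', hc'a⟩

lemma sides_ne (hq : IsQuad T a b c c') :
    ({a, c} : Finset (Fin m)) ≠ {a, b} ∧ ({c, b} : Finset (Fin m)) ≠ {a, b} ∧
      ({b, c'} : Finset (Fin m)) ≠ {a, b} ∧ ({c', a} : Finset (Fin m)) ≠ {a, b} := by
  obtain ⟨hab, hac, hcb, hbc', hc'a⟩ := hq.ne
  simp only [ne_eq, Finset.pair_eq_pair_iff]
  tauto

lemma isTriangle_left (hq : IsQuad T a b c c') : IsTriangle m T {a, b, c} := by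
  obtain ⟨hab, hac, hcb, -⟩ := hq.ne
  exact ⟨a, b, c, hab, hac, hcb.symm, rfl, .inr hq.mem, hq.left.2.1,
    pair_comm c b ▸ hq.left.2.2⟩

lemma isTriangle_right (hq : IsQuad T a b c c') : IsTriangle m T {a, b, c'} := by
  obtain ⟨hab, -, -, hbc', hc'a⟩ := hq.ne
  exact ⟨a, b, c', hab, hc'a.symm, hbc', rfl, .inr hq.mem, pair_comm c' a ▸ hq.right.2.2,
    hq.right.2.1⟩

lemma triangle_eq (hq : IsQuad T a b c c') {t : Finset (Fin m)} (ht : IsTriangle m T t)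
    (hab : {a, b} ⊆ t) : t = {a, b, c} ∨ t = {a, b, c'} := by
  have ha : a ∈ t := hab (by simp)
  have hb : b ∈ t := hab (by simp)
  obtain ⟨w, hw, hwa, hwb⟩ := ht.exists_mem_ne a b
  have haw := ht.isSide ha hw (Ne.symm hwa)
  have hwb' := ht.isSide hw hb hwb
  have ht_eq : t = {a, b, w} := by
    refine (eq_of_subset_of_card_le ?_ ?_).symm
    · simp [insert_subset_iff, ha, hb, hw]
    · rw [ht.card_eq, card_eq_three.mpr ⟨a, b, w, hq.ne.1, Ne.symm hwa, Ne.symm hwb, rfl⟩]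
  rcases cycBtw_or_cycBtw (Ne.symm hwa) hwb hq.ne.1 with h | h
  · exact .inl (ht_eq.trans (by rw [IsApex.eq ⟨h, haw, hwb'⟩ hq.left]))
  · have hw' : IsApex T b a w := ⟨h, pair_comm w b ▸ hwb', pair_comm a w ▸ haw⟩
    exact .inr (ht_eq.trans (by rw [hw'.eq hq.right]))

lemma neighbor_iff (hq : IsQuad T a b c c') {e : Finset (Fin m)} (he : IsDiagonal m e) :
    Neighbor m T e {a, b} ↔ e ⊆ {a, b, c} ∨ e ⊆ {a, b, c'} := by
  constructor
  · rintro ⟨-, -, t, ht, het, habt⟩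
    rcases hq.triangle_eq ht habt with rfl | rfl
    exacts [.inl het, .inr het]
  · rintro (het | het)
    · exact ⟨hq.isTriangle_left.mem_of_subset he het, hq.mem, _, hq.isTriangle_left, het,
        by simp [insert_subset_iff]⟩
    · exact ⟨hq.isTriangle_right.mem_of_subset he het, hq.mem, _, hq.isTriangle_right, het,
        by simp [insert_subset_iff]⟩

lemma neighbor_of_neighbor (hq : IsQuad T a b c c') (hq' : IsQuad T' a b c c')
    {e : Finset (Fin m)} (h : Neighbor m T e {a, b}) : Neighbor m T' e {a, b} :=
  have he := T.isDiagonal e h.1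
  (hq'.neighbor_iff he).mpr ((hq.neighbor_iff he).mp h)

lemma flip_eq (hq : IsQuad T a b c c') {e : Finset (Fin m)} (hf : IsFlip m T T' {a, b} e) :
    e = {c, c'} := by
  obtain ⟨p, q, -, -, rfl⟩ := T'.isDiagonal e hf.mem_right
  have hside : ∀ {s}, IsSide m T s → s ≠ {a, b} → ¬ Cross m s {p, q} :=
    fun hs hne => (hf.isSide hs hne).not_cross (.inr hf.mem_right)
  obtain ⟨hne₁, hne₂, hne₃, hne₄⟩ := hq.sides_ne
  exact eq_of_cross_of_not_cross_quad hq.left.1 hq.right.1 (hside hq.left.2.1 hne₁)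
    (hside hq.left.2.2 hne₂) (hside hq.right.2.1 hne₃) (hside hq.right.2.2 hne₄) hf.cross.symm

lemma not_cross_of_mem (hq : IsQuad T a b c c') {x : Finset (Fin m)} (hx : x ∈ T.diagonals)
    (hxab : x ≠ {a, b}) : ¬ Cross m {c, c'} x := by
  obtain ⟨p, q, -, -, rfl⟩ := T.isDiagonal x hx
  obtain ⟨hc, hac, hcb⟩ := hq.left
  obtain ⟨hc', hbc', hc'a⟩ := hq.right
  exact not_cross_of_not_cross_quad hc hc' (hac.not_cross (.inr hx)) (hcb.not_cross (.inr hx))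
    (hbc'.not_cross (.inr hx)) (hc'a.not_cross (.inr hx)) (T.noncross _ hq.mem _ hx) hxab

lemma exists_isFlip (hq : IsQuad T a b c c') : ∃ T', IsFlip m T T' {a, b} {c, c'} := by
  obtain ⟨hc, hac, hcb⟩ := hq.left
  obtain ⟨hc', hbc', hc'a⟩ := hq.right
  obtain ⟨hne₁, hne₂, hne₃, hne₄⟩ := hq.sides_ne
  have hcross := cross_quad hc hc'
  set D := insert {c, c'} (T.diagonals.erase {a, b})
  have hkeep : ∀ {s}, IsSide m T s → s ≠ {a, b} → ∀ {y}, (∀ g ∈ D, ¬ Cross m y g) →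
      ¬ Cross m s y := by
    rintro s (⟨u, v, huv, rfl⟩ | hs) hsab y hy
    · exact not_cross_of_polyAdj huv y
    · exact fun h => hy s (mem_insert_of_mem (mem_erase.mpr ⟨hsab, hs⟩)) h.symm
  refine ⟨⟨D, ?_, ?_, ?_⟩, hq.mem, fun h => T.noncross _ hq.mem _ h hcross, rfl⟩
  · simp only [D, forall_mem_insert]
    exact ⟨isDiagonal_quad hc hc', fun e he => T.isDiagonal e (mem_of_mem_erase he)⟩
  · simp only [D, forall_mem_insert, mem_erase]
    exact ⟨⟨not_cross_self _, fun x hx => hq.not_cross_of_mem hx.2 hx.1⟩, fun x hx =>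
      ⟨fun h => hq.not_cross_of_mem hx.2 hx.1 h.symm, fun y hy => T.noncross x hx.2 y hy.2⟩⟩
  · intro y hy hny
    by_cases hyab : Cross m y {a, b}
    · obtain ⟨p, q, -, -, rfl⟩ := hy
      rw [eq_of_cross_of_not_cross_quad hc hc' (hkeep hac hne₁ hny) (hkeep hcb hne₂ hny)
        (hkeep hbc' hne₃ hny) (hkeep hc'a hne₄ hny) hyab.symm]
      exact mem_insert_self _ _
    · have hyT : y ∈ T.diagonals := T.maximal y hy fun g hg => by
        obtain rfl | hgab := eq_or_ne g {a, b}
        · exact hyab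
        · exact hny g (mem_insert_of_mem (mem_erase.mpr ⟨hgab, hg⟩))
      have hyab' : y ≠ {a, b} := fun h => hny _ (mem_insert_self _ _) (h ▸ hcross)
      exact mem_insert_of_mem (mem_erase.mpr ⟨hyab', hyT⟩)

lemma flip (hq : IsQuad T a b c c') (hf : IsFlip m T T' {a, b} {c, c'}) :
    IsQuad T' c c' b a := by
  obtain ⟨hne₁, hne₂, hne₃, hne₄⟩ := hq.sides_ne
  obtain ⟨h₁, h₂⟩ := cycBtw_quad_flip hq.left.1 hq.right.1
  exact ⟨hf.mem_right, ⟨h₁, hf.isSide hq.left.2.2 hne₂, hf.isSide hq.right.2.1 hne₃⟩,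
    ⟨h₂, hf.isSide hq.right.2.2 hne₄, hf.isSide hq.left.2.1 hne₁⟩⟩

lemma of_isFlip_of_not_neighbor {e f : Finset (Fin m)} (hf : IsFlip m T U e f) (hq : IsQuad U a b c c')
    (hn : ¬ Neighbor m U f {a, b}) : IsQuad T a b c c' := by
  have hne : ∀ {s}, s ⊆ {a, b, c} ∨ s ⊆ {a, b, c'} → s ≠ f := fun hs h =>
    hn ((hq.neighbor_iff (U.isDiagonal f hf.mem_right)).mpr (h ▸ hs))
  have hside : ∀ {s}, IsSide m U s → s ⊆ {a, b, c} ∨ s ⊆ {a, b, c'} → IsSide m T s :=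
    fun hs hsub => hf.isSide_of_right hs (hne hsub)
  refine ⟨hf.mem_of_mem_right hq.mem (hne (.inl (by simp [insert_subset_iff]))),
    ⟨hq.left.1, hside hq.left.2.1 ?_, hside hq.left.2.2 ?_⟩,
    ⟨hq.right.1, hside hq.right.2.1 ?_, hside hq.right.2.2 ?_⟩⟩ <;>
  simp [insert_subset_iff]

/-- After the flip, a diagonal can only gain a neighbor across one of the new triangles `cc'b` and
`cc'a`, whose other sides are sides of `abc` or `abc'`. -/
lemma neighbor_of_isFlip (hq : IsQuad T a b c c') (hf : IsFlip m T U {a, b} {c, c'})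
    {X Y : Finset (Fin m)} (h : Neighbor m U X Y) (hX : X ≠ {c, c'}) :
    Neighbor m T X Y ∨ Neighbor m T X {a, b} := by
  obtain ⟨hXU, hYU, t, ht, hXt, hYt⟩ := h
  have hXT := hf.mem_of_mem_right hXU hX
  by_cases hcc' : {c, c'} ⊆ t
  · right
    rw [hq.neighbor_iff (T.isDiagonal X hXT)]
    obtain ⟨p, q, hpq, -, rfl⟩ := T.isDiagonal X hXT
    rw [Ne, Finset.pair_eq_pair_iff] at hX
    rcases (hq.flip hf).triangle_eq ht hcc' with rfl | rfl <;>
    · simp only [insert_subset_iff, mem_insert, mem_singleton, singleton_subset_iff] at hXt ⊢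
      grind
  · left
    exact ⟨hXT, hf.mem_of_mem_right hYU fun h => hcc' (h ▸ hYt), t,
      hf.isTriangle_of_right ht hcc', hXt, hYt⟩

end IsQuad

end Triangulation

end Geometry

/-- `Fin.succAbove` on `ℕ`. -/
def Nat.succAbove (j k : ℕ) : ℕ := if k < j then k else k + 1

lemma Nat.succAbove_of_lt {j k : ℕ} (h : k < j) : Nat.succAbove j k = k := if_pos h

lemma Nat.succAbove_of_le {j k : ℕ} (h : j ≤ k) : Nat.succAbove j k = k + 1 :=
  if_neg (Nat.not_lt.mpr h)

lemma Nat.succAbove_strictMono (j : ℕ) : StrictMono (Nat.succAbove j) := by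
  intro i k h
  unfold Nat.succAbove
  split_ifs <;> omega

lemma Fin.val_succAbove {n : ℕ} (p : Fin (n + 1)) (i : Fin n) :
    (p.succAbove i : ℕ) = Nat.succAbove p i := by
  unfold Fin.succAbove Nat.succAbove
  split_ifs <;> simp_all [Fin.lt_def]

/-- The permutation of `Fin n` induced by `σ` between the complements of `0` and of `σ 0`. -/
def Equiv.Perm.removeZero {n : ℕ} (σ : Equiv.Perm (Fin (n + 1))) : Equiv.Perm (Fin n) :=
  (finSuccAboveEquiv 0).trans <| (σ.subtypeEquiv (p := (· ≠ 0)) (q := (· ≠ σ 0))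
    fun _ => σ.injective.ne_iff.symm).trans (finSuccAboveEquiv (σ 0)).symm

lemma Equiv.Perm.succAbove_removeZero {n : ℕ} (σ : Equiv.Perm (Fin (n + 1))) (p : Fin n) :
    (σ 0).succAbove (σ.removeZero p) = σ p.succ := by
  have h : (finSuccAboveEquiv (σ 0) (σ.removeZero p) : Fin (n + 1)) = σ p.succ := by
    simp [Equiv.Perm.removeZero, finSuccAboveEquiv_apply]
  simpa [finSuccAboveEquiv_apply] using h

section FlipSeq

variable {m r : ℕ} {F : ℕ → Finset (Fin m) × Finset (Fin m)} {Ts : ℕ → Triangulation m}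

lemma IsFlipSeq.of_succ (h₀ : IsFlip m (Ts 0) (Ts 1) (F 0).1 (F 0).2)
    (h : IsFlipSeq m r (fun k => F (k + 1)) (fun k => Ts (k + 1))) : IsFlipSeq m (r + 1) F Ts
  | 0, _ => h₀
  | k + 1, hk => h k (by omega)

lemma IsFlipSeq.removeNth (hseq : IsFlipSeq m (r + 1) F Ts) {j : ℕ} {Ts₁ : ℕ → Triangulation m}
    (hflip : ∀ k ≤ j, IsFlip m (Ts k) (Ts₁ k) (F j).1 (F j).2)
    (hafter : ∀ k, j ≤ k → Ts₁ k = Ts (k + 1)) :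
    IsFlipSeq m r (fun k => F (Nat.succAbove j k)) Ts₁ := by
  intro k hk
  rcases lt_or_ge k j with hkj | hjk
  · simp only [Nat.succAbove_of_lt hkj]
    exact (hseq k (by omega)).commute (hflip k hkj.le) (hflip (k + 1) hkj)
  · simp only [Nat.succAbove_of_le hjk, hafter k hjk, hafter (k + 1) (by omega : j ≤ k + 1)]
    exact hseq (k + 1) (by omega)

lemma IsFlipSeq.isQuad_of_forall_not_arc (hseq : IsFlipSeq m r F Ts) {j : ℕ} (hj : j < r)
    {a b c c' : Fin m} (hq : IsQuad (Ts j) a b c c') (hd : (F j).1 = {a, b})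
    (hfree : ∀ i, ¬ Arc m r F Ts i j) : ∀ k ≤ j, IsQuad (Ts k) a b c c' := by
  intro k hk
  induction hk using Nat.decreasingInduction with
  | self => exact hq
  | of_succ k hk ih =>
    exact ih.of_isFlip_of_not_neighbor (hseq k (by omega)) fun hn =>
      hfree k ⟨hk, hj, hd ▸ ih.neighbor_of_neighbor hq hn⟩

theorem IsFlipSeq.exists_of_forall_not_arc (hseq : IsFlipSeq m (r + 1) F Ts) {j : ℕ}
    (hj : j < r + 1) (hfree : ∀ i, ¬ Arc m (r + 1) F Ts i j) :
    ∃ Ts₁ : ℕ → Triangulation m, IsFlip m (Ts 0) (Ts₁ 0) (F j).1 (F j).2 ∧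
      IsFlipSeq m r (fun k => F (Nat.succAbove j k)) Ts₁ ∧ Ts₁ r = Ts (r + 1) ∧
      ∀ i k, Arc m r (fun k => F (Nat.succAbove j k)) Ts₁ i k →
        Arc m (r + 1) F Ts (Nat.succAbove j i) (Nat.succAbove j k) := by
  obtain ⟨a, b, c, c', hd, hq⟩ := exists_isQuad (hseq j hj).1
  have hd' : (F j).2 = {c, c'} := hq.flip_eq (hd ▸ hseq j hj)
  have hquad := hseq.isQuad_of_forall_not_arc hj hq hd hfree
  choose W hW using fun k (hk : k < j) => (hquad k hk.le).exists_isFlip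
  set Ts₁ : ℕ → Triangulation m := fun k => if hk : k < j then W k hk else Ts (k + 1)
  have hafter : ∀ k, j ≤ k → Ts₁ k = Ts (k + 1) := fun k hk => dif_neg (Nat.not_lt.mpr hk)
  have hflip : ∀ k ≤ j, IsFlip m (Ts k) (Ts₁ k) (F j).1 (F j).2 := by
    intro k hk
    rcases hk.lt_or_eq with hk | rfl
    · simpa [Ts₁, hk, hd, hd'] using hW k hk
    · exact hafter k le_rfl ▸ hseq k hj
  refine ⟨Ts₁, hflip 0 (Nat.zero_le _), hseq.removeNth hflip hafter, hafter r (by omega), ?_⟩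
  rintro i k ⟨hik, hkr, hnb⟩
  rcases lt_or_ge k j with hkj | hjk
  · simp only [Nat.succAbove_of_lt hkj, Nat.succAbove_of_lt (hik.trans hkj)] at hnb ⊢
    have hX : (F i).2 ≠ {c, c'} := fun h =>
      (hflip (i + 1) (by omega)).2.1 (hd' ▸ h ▸ (hseq i (by omega)).mem_right)
    rcases (hquad k hkj.le).neighbor_of_isFlip (hd ▸ hd' ▸ hflip k hkj.le) hnb hX with h | h
    · exact ⟨hik, by omega, h⟩
    · exact absurd ⟨hik.trans hkj, hj, hd ▸ (hquad k hkj.le).neighbor_of_neighbor hq h⟩ (hfree i)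
  · simp only [Nat.succAbove_of_le hjk, hafter k hjk] at hnb ⊢
    refine ⟨?_, by omega, hnb⟩
    simpa [Nat.succAbove_of_le hjk] using Nat.succAbove_strictMono j hik

end FlipSeq

theorem topological_sort_valid_general (m : ℕ)
    (r : ℕ) (F : ℕ → Finset (Fin m) × Finset (Fin m)) (Ts : ℕ → Triangulation m)
    (hseq : IsFlipSeq m r F Ts)
    (σ : Equiv.Perm (Fin r))
    (htopo : ∀ p q : Fin r, Arc m r F Ts (σ p).val (σ q).val → p < q)
    (G : ℕ → Finset (Fin m) × Finset (Fin m))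
    (hG : ∀ p : Fin r, G p.val = F (σ p).val) :
    ∃ Ts' : ℕ → Triangulation m,
      IsFlipSeq m r G Ts' ∧ Ts' 0 = Ts 0 ∧ Ts' r = Ts r := by
  induction r generalizing F Ts G with
  | zero => exact ⟨Ts, fun i hi => absurd hi (Nat.not_lt_zero i), rfl, rfl⟩
  | succ r ih =>
    have hfree : ∀ i, ¬ Arc m (r + 1) F Ts i (σ 0) := fun i hi =>
      Fin.not_lt_zero _ (htopo (σ.symm ⟨i, hi.1.trans hi.2.1⟩) 0 (by simpa using hi))
    obtain ⟨Ts₁, h₀, hseq₁, hlast, harc⟩ := hseq.exists_of_forall_not_arc (σ 0).isLt hfree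
    have hσ : ∀ p : Fin r, Nat.succAbove (σ 0) (σ.removeZero p) = σ p.succ := fun p => by
      rw [← Fin.val_succAbove, σ.succAbove_removeZero]
    obtain ⟨Ts', hseq', h0', hr'⟩ := ih _ Ts₁ hseq₁ σ.removeZero
      (fun p q h => Fin.succ_lt_succ_iff.mp (htopo _ _ (by simpa only [hσ] using harc _ _ h)))
      (fun k => G (k + 1)) (fun p => by simpa only [hσ, Fin.val_succ] using hG p.succ)
    refine ⟨fun | 0 => Ts 0 | k + 1 => Ts' k, IsFlipSeq.of_succ ?_ hseq', rfl, hr'.trans hlast⟩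
    show IsFlip m (Ts 0) (Ts' 0) (G 0).1 (G 0).2
    rw [show G 0 = F (σ 0) from hG 0, h0']
    exact h₀

/-- Let `F` be a flip sequence of length `r` transforming `Ts 0` into `Ts r`,
and let `π(F)` be a permutation of the flips of `F` that is a topological sort
of the DAG `D_F`: the permuted sequence `G` places at position `p` the flip
`F (σ p)`, and whenever `D_F` has an arc from flip `σ p` to flip `σ q`, the
position `p` comes before the position `q`. Then `π(F)` is a valid sequence of
flips transforming `Ts 0` into `Ts r`. -/
theorem topological_sort_valid (m : ℕ) (hm : 3 ≤ m)
    (r : ℕ) (F : ℕ → Finset (Fin m) × Finset (Fin m)) (Ts : ℕ → Triangulation m)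
    (hseq : IsFlipSeq m r F Ts)
    (σ : Equiv.Perm (Fin r))
    (htopo : ∀ p q : Fin r, Arc m r F Ts (σ p).val (σ q).val → p < q)
    (G : ℕ → Finset (Fin m) × Finset (Fin m))
    (hG : ∀ p : Fin r, G p.val = F (σ p).val) :
    ∃ Ts' : ℕ → Triangulation m,
      IsFlipSeq m r G Ts' ∧ Ts' 0 = Ts 0 ∧ Ts' r = Ts r :=
  topological_sort_valid_general m r F Ts hseq σ htopo G hG
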